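/- With T(x, y) = (x + 1, -y) acting on ℝ² and P = (0, a) with a > 0, a point (x, y) ∈ ℝ² satisfies ‖(x,y) - P‖ < ‖T^n(x,y) - P‖ for every nonzero integer n if and only if -1 < x < 1, 1 + 2x + 4ay > 0, and 1 - 2x + 4ay > 0. -/
import Mathlib

/-- For `T(x,y) = (x+1, -y)` acting on `ℝ²` and `P = (0,a)` with `a > 0`, a point `(x,y)`
is strictly closer to `P` than every `Tⁿ(x,y)` with `n ≠ 0` iff `-1 < x < 1`,
`1 + 2x + 4ay > 0` and `1 - 2x + 4ay > 0`.  Here `Tⁿ(x,y) = (x+n, (-1)ⁿ y)`. -/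
theorem stmt_18 (a : ℝ) (ha : 0 < a) (x y : ℝ) :
    (∀ n : ℤ, n ≠ 0 →
        Real.sqrt (x ^ 2 + (y - a) ^ 2) <
          Real.sqrt ((x + n) ^ 2 + ((-1 : ℝ) ^ n * y - a) ^ 2)) ↔
      (-1 < x ∧ x < 1 ∧ 1 + 2 * x + 4 * a * y > 0 ∧ 1 - 2 * x + 4 * a * y > 0) := by
  have key : ∀ n : ℤ, (Real.sqrt (x ^ 2 + (y - a) ^ 2) <
      Real.sqrt ((x + n) ^ 2 + ((-1 : ℝ) ^ n * y - a) ^ 2)) ↔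
      x ^ 2 + (y - a) ^ 2 < (x + n) ^ 2 + ((-1 : ℝ) ^ n * y - a) ^ 2 := by
    intro n
    exact Real.sqrt_lt_sqrt_iff (by positivity)
  constructor
  · intro h
    have h1 := (key 1).mp (h 1 (by norm_num))
    have h2 := (key (-1)).mp (h (-1) (by norm_num))
    have h3 := (key 2).mp (h 2 (by norm_num))
    have h4 := (key (-2)).mp (h (-2) (by norm_num))
    norm_num at h1 h2 h3 h4
    refine ⟨by nlinarith, by nlinarith, by nlinarith, by nlinarith⟩
  · rintro ⟨hx1, hx2, hp, hm⟩ n hn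
    rw [key n]
    rcases Int.even_or_odd n with he | ho
    · rw [he.neg_one_zpow]
      have hn2 : n ≤ -2 ∨ 2 ≤ n := by
        rcases he with ⟨k, hk⟩; omega
      rcases hn2 with hn' | hn'
      · have : (n : ℝ) ≤ -2 := by exact_mod_cast hn'
        nlinarith
      · have : (2 : ℝ) ≤ (n : ℝ) := by exact_mod_cast hn'
        nlinarith
    · rw [ho.neg_one_zpow]
      have hn1 : n ≤ -1 ∨ 1 ≤ n := by omega
      rcases hn1 with hn' | hn'
      · have h' : (n : ℝ) ≤ -1 := by exact_mod_cast hn'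
        nlinarith [mul_nonneg (by linarith : (0:ℝ) ≤ -(n:ℝ) - 1) (by linarith : (0:ℝ) ≤ -(n:ℝ) + 1 - 2*x)]
      · have h' : (1 : ℝ) ≤ (n : ℝ) := by exact_mod_cast hn'
        nlinarith [mul_nonneg (by linarith : (0:ℝ) ≤ (n:ℝ) - 1) (by linarith : (0:ℝ) ≤ (n:ℝ) + 1 + 2*x)]
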